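/- In K{{t}} with the higher topology, the ring of integers 𝒪{{t}} and the rank-two ring of integers Σ_{i<0} 𝔭 t^i + Σ_{i≥0} 𝒪 t^i are neither compactoid nor c-compact (they are bounded and complete 𝒪-submodules which fail to be compactoid). -/

import Mathlib

/-!
Common setting: `K` is a characteristic-zero local field (a finite extension of `ℚ_p`)
with ring of integers `𝒪 = {c : K | ‖c‖ ≤ 1}`, maximal ideal `𝔭 = {c : K | ‖c‖ < 1}`,
residue field of cardinality `q` and the absolute value normalised by `‖π‖ = q⁻¹`.
We formalise the two-dimensional local fields `K((t))` (as `LaurentSeries K`) and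
`K{{t}}` (as the submodule `mixedCarrier K` of `ℤ → K`), their higher topologies, and
the relevant functional-analytic notions (lattices, seminorms, boundedness,
c-compactness, compactoidness, completeness for nets, duality).
-/

open Filter Topology Set Pointwise
open scoped Classical

noncomputable section

namespace TwoDimLF

variable (K : Type) [NontriviallyNormedField K]

/-- `K` is a characteristic-zero nonarchimedean local field: the norm is nonarchimedean,
takes the values `q^ℤ` on `K˟` (with a uniformizer of norm `q⁻¹`), `K` is complete, locally
compact, of characteristic zero, and the residue field has exactly `q` elements. -/
structure IsCharZeroLocalField (q : ℕ) : Prop where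
  nonarch : ∀ x y : K, ‖x + y‖ ≤ max ‖x‖ ‖y‖
  one_lt_q : 1 < q
  norm_values : ∀ x : K, x ≠ 0 → ∃ n : ℤ, ‖x‖ = (q : ℝ) ^ (-n)
  exists_uniformizer : ∃ π : K, ‖π‖ = ((q : ℝ))⁻¹
  charZero : CharZero K
  locallyCompact : LocallyCompactSpace K
  complete : CompleteSpace K
  residue_card : ∃ s : Finset K, s.card = q ∧
    ∀ x : K, ‖x‖ ≤ 1 → ∃! y, y ∈ s ∧ ‖x - y‖ < 1

/-- The fractional ideal `𝔭^n ⊆ K` for `n ∈ ℤ ∪ {-∞}`, with the convention `𝔭^(-∞) = K`. -/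
def pB (q : ℕ) (n : WithBot ℤ) : Set K :=
  WithBot.recBotCoe Set.univ (fun m : ℤ => {x : K | ‖x‖ ≤ (q : ℝ) ^ (-m)}) n

/-- The fractional ideal `𝔭^n ⊆ K` for `n ∈ ℤ ∪ {∞}`, with the convention `𝔭^∞ = {0}`. -/
def pT (q : ℕ) (n : WithTop ℤ) : Set K :=
  WithTop.recTopCoe {0} (fun m : ℤ => {x : K | ‖x‖ ≤ (q : ℝ) ^ (-m)}) n

/-- The fractional ideal `𝔭^n ⊆ K` for `n ∈ ℤ ∪ {±∞}`. -/
def pE (q : ℕ) (n : WithBot (WithTop ℤ)) : Set K :=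
  WithBot.recBotCoe Set.univ (fun m : WithTop ℤ => pT K q m) n

/-- `q ^ n ∈ ℝ` for `n ∈ ℤ ∪ {-∞}`, with the convention `q^(-∞) = 0`. -/
def qpow (q : ℕ) (n : WithBot ℤ) : ℝ :=
  WithBot.recBotCoe 0 (fun m : ℤ => (q : ℝ) ^ m) n

/-- `1 - k` for `k ∈ ℤ ∪ {±∞}` (so `1 - (±∞) = ∓∞`). -/
def oneSubE : WithBot (WithTop ℤ) → WithBot (WithTop ℤ) :=
  WithBot.recBotCoe ((⊤ : WithTop ℤ) : WithBot (WithTop ℤ))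
    (WithTop.recTopCoe (⊥ : WithBot (WithTop ℤ))
      (fun z : ℤ => (((1 - z : ℤ) : WithTop ℤ) : WithBot (WithTop ℤ))))

section LCS

variable {V : Type} [AddCommGroup V] [Module K V]

/-- `S` is an `𝒪`-submodule of the `K`-vector space `V`, where `𝒪 = {c : K | ‖c‖ ≤ 1}`
is the ring of integers of `K`. -/
def IsOSubmodule (S : Set V) : Prop :=
  (0 : V) ∈ S ∧ (∀ x ∈ S, ∀ y ∈ S, x + y ∈ S) ∧
    ∀ c : K, ‖c‖ ≤ 1 → ∀ x ∈ S, c • x ∈ S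

/-- `S` is an `𝒪`-lattice in `V`: an `𝒪`-submodule such that every vector is carried
into `S` by some nonzero scalar. -/
def IsLatticeSet (S : Set V) : Prop :=
  IsOSubmodule K S ∧ ∀ v : V, ∃ a : K, a ≠ 0 ∧ a • v ∈ S

/-- A (nonarchimedean) seminorm on the `K`-vector space `V`. -/
def IsSeminorm (N : V → ℝ) : Prop :=
  (∀ (c : K) (v : V), N (c • v) = ‖c‖ * N v) ∧ ∀ v w : V, N (v + w) ≤ max (N v) (N w)

/-- The gauge seminorm of a lattice `Λ ⊆ V`: `‖v‖_Λ = inf {‖a‖ : v ∈ aΛ}`. -/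
def gaugeSeminorm (Λ : Set V) (v : V) : ℝ :=
  sInf {r : ℝ | ∃ a : K, v ∈ a • Λ ∧ r = ‖a‖}

/-- The group topology on `W` determined by a family `B` of neighbourhoods of zero:
neighbourhoods of `x` are generated by the translates `x + U`, `U ∈ B`. -/
def addTopologyOf {W : Type} [AddCommGroup W] (B : Set (Set W)) : TopologicalSpace W :=
  TopologicalSpace.mkOfNhds fun x => Filter.map (fun v => x + v) (⨅ U ∈ B, Filter.principal U)

/-- `B` is (Von-Neumann) bounded for the locally convex topology `τ`: every open lattice
absorbs it. -/
def IsVNBounded (τ : TopologicalSpace V) (B : Set V) : Prop :=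
  ∀ Λ : Set V, IsLatticeSet K Λ → IsOpen[τ] Λ → ∃ a : K, B ⊆ a • Λ

/-- The `𝒪`-submodule `A ⊆ V` is c-compact: for every decreasing filtered family of open
lattices `L i`, the canonical map `A → lim A/(L i ∩ A)` is surjective (phrased via
compatible families of representatives). -/
def IsCCompact (τ : TopologicalSpace V) (A : Set V) : Prop :=
  ∀ (ι : Type) (L : ι → Set V),
    (∀ i, IsLatticeSet K (L i) ∧ IsOpen[τ] (L i)) →
    (∀ i j, ∃ k, L k ⊆ L i ∧ L k ⊆ L j) →
    ∀ x : ι → V, (∀ i, x i ∈ A) →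
      (∀ i j, L j ⊆ L i → x j - x i ∈ L i) →
      ∃ a ∈ A, ∀ i, a - x i ∈ L i

/-- The `𝒪`-submodule `A ⊆ V` is compactoid: for every open lattice `Λ` there are finitely
many vectors `v₁, …, v_m ∈ V` with `A ⊆ Λ + 𝒪v₁ + ⋯ + 𝒪v_m`. -/
def IsCompactoid (τ : TopologicalSpace V) (A : Set V) : Prop :=
  ∀ Λ : Set V, IsLatticeSet K Λ → IsOpen[τ] Λ →
    ∃ (m : ℕ) (v : Fin m → V),
      A ⊆ {u : V | ∃ l ∈ Λ, ∃ c : Fin m → K, (∀ j, ‖c j‖ ≤ 1) ∧ u = l + ∑ j, c j • v j}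

/-- `A ⊆ V` is complete: every Cauchy net with values in `A` converges to a point of `A`
(for the topology `τ`). -/
def IsNetComplete (τ : TopologicalSpace V) (A : Set V) : Prop :=
  ∀ (ι : Type) [Preorder ι] [Nonempty ι],
    (∀ i j : ι, ∃ k, i ≤ k ∧ j ≤ k) →
    ∀ x : ι → V, (∀ i, x i ∈ A) →
      (∀ U ∈ @nhds V τ 0, ∃ i0, ∀ j ≥ i0, ∀ k ≥ i0, x j - x k ∈ U) →
      ∃ a ∈ A, Filter.Tendsto x Filter.atTop (@nhds V τ a)

/-- `τ` makes `V` a locally convex topological `K`-vector space: it is a vector-space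
topology whose filter of neighbourhoods of zero admits a basis of lattices. -/
def IsLCTVS (τ : TopologicalSpace V) : Prop :=
  @IsTopologicalAddGroup V τ _ ∧ @ContinuousSMul K V _ _ τ ∧
    ∀ S ∈ @nhds V τ 0, ∃ Λ : Set V, IsLatticeSet K Λ ∧ Λ ∈ @nhds V τ 0 ∧ Λ ⊆ S

/-- The topological dual of `(V, τ)`: continuous `K`-linear forms, as a set of functions. -/
def dualSet (τ : TopologicalSpace V) : Set (V → K) :=
  {l | IsLinearMap K l ∧ @Continuous V K τ _ l}

/-- Basic neighbourhoods of zero for the `c`-topology on `V → K`: uniform convergence on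
compactoid `𝒪`-submodules. -/
def cTopBasic (τ : TopologicalSpace V) : Set (Set (V → K)) :=
  {S | ∃ (B : Set V) (ε : ℝ), IsOSubmodule K B ∧ IsCompactoid K τ B ∧ 0 < ε ∧
    S = {l : V → K | ∀ x ∈ B, ‖l x‖ ≤ ε}}

/-- The `c`-topology (uniform convergence on compactoid `𝒪`-submodules) on `V → K`. -/
def cTop (τ : TopologicalSpace V) : TopologicalSpace (V → K) :=
  addTopologyOf (cTopBasic K τ)

/-- The pseudo-polar `A^p = {l ∈ V' : |l(v)| < 1 for all v ∈ A}`. -/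
def pseudoPolar (τ : TopologicalSpace V) (A : Set V) : Set (V → K) :=
  {l | l ∈ dualSet K τ ∧ ∀ v ∈ A, ‖l v‖ < 1}

/-- The pseudo-bipolar `A^{pp} = {v ∈ V : |l(v)| < 1 for all l ∈ A^p}`. -/
def pseudoBipolar (τ : TopologicalSpace V) (A : Set V) : Set V :=
  {v | ∀ l ∈ pseudoPolar K τ A, ‖l v‖ < 1}

end LCS

/-! ### The equal characteristic field `K((t))` -/

/-- Basic neighbourhoods of zero for the higher topology on `K((t))`:
`Σ U_i t^i` where each `U_i` is an open neighbourhood of `0` in `K` and `U_i = K` for all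
sufficiently large `i`. -/
def laurentBasic : Set (Set (LaurentSeries K)) :=
  {S | ∃ U : ℤ → Set K, (∀ i, IsOpen (U i) ∧ (0 : K) ∈ U i) ∧
    (∃ N : ℤ, ∀ i, N ≤ i → U i = Set.univ) ∧
    S = {f : LaurentSeries K | ∀ i, f.coeff i ∈ U i}}

/-- The higher topology on `K((t))`. -/
def laurentTop : TopologicalSpace (LaurentSeries K) := addTopologyOf (laurentBasic K)

/-- `Λ = Σ_{i∈ℤ} 𝔭^{n_i} t^i ⊆ K((t))` for a sequence `(n_i) ⊆ ℤ ∪ {-∞}`. -/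
def laurentLambda (q : ℕ) (n : ℤ → WithBot ℤ) : Set (LaurentSeries K) :=
  {f | ∀ i, f.coeff i ∈ pB K q (n i)}

/-- `B = Σ_{i∈ℤ} 𝔭^{k_i} t^i ⊆ K((t))` for a sequence `(k_i) ⊆ ℤ ∪ {∞}`. -/
def laurentPT (q : ℕ) (k : ℤ → WithTop ℤ) : Set (LaurentSeries K) :=
  {f | ∀ i, f.coeff i ∈ pT K q (k i)}

/-- `A = Σ_{i∈ℤ} 𝔭^{k_i} t^i ⊆ K((t))` for a sequence `(k_i) ⊆ ℤ ∪ {±∞}`. -/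
def laurentPE (q : ℕ) (k : ℤ → WithBot (WithTop ℤ)) : Set (LaurentSeries K) :=
  {f | ∀ i, f.coeff i ∈ pE K q (k i)}

/-- The admissible seminorm `‖Σ x_i t^i‖ = max_i ‖x_i‖ q^{n_i}` on `K((t))`. -/
def laurentSeminorm (q : ℕ) (n : ℤ → WithBot ℤ) (f : LaurentSeries K) : ℝ :=
  sSup {r : ℝ | ∃ i : ℤ, r = ‖f.coeff i‖ * qpow q (n i)}

/-- The ring of integers `K[[t]] ⊆ K((t))`. -/
def laurentIntegers : Set (LaurentSeries K) := {f | ∀ i, i < 0 → f.coeff i = 0}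

/-- The rank-two ring of integers `𝒪 + tK[[t]] ⊆ K((t))`. -/
def laurentRankTwo : Set (LaurentSeries K) :=
  {f | (∀ i, i < 0 → f.coeff i = 0) ∧ ‖f.coeff 0‖ ≤ 1}

/-- The pairing `γ(x)(y) = π₀(xy) = Σ_i x_i y_{-i}` on `K((t))`. -/
def laurentPairing (x y : LaurentSeries K) : K := ∑' i : ℤ, x.coeff i * y.coeff (-i)

/-! ### The mixed characteristic field `K{{t}}` -/

/-- The underlying `K`-vector space of `K{{t}}`: functions `x : ℤ → K` (coefficients of
`Σ x_i t^i`) with `inf_i v_K(x_i) > -∞` (i.e. bounded norms) and `x_i → 0` as `i → -∞`. -/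
def mixedCarrier : Submodule K (ℤ → K) where
  carrier := {x | (∃ C : ℝ, ∀ i, ‖x i‖ ≤ C) ∧ Filter.Tendsto x Filter.atBot (nhds (0 : K))}
  zero_mem' := ⟨⟨0, fun i => by simp⟩, tendsto_const_nhds⟩
  add_mem' := by
    rintro x y ⟨⟨C, hC⟩, hx⟩ ⟨⟨D, hD⟩, hy⟩
    refine ⟨⟨C + D, fun i => (norm_add_le _ _).trans (add_le_add (hC i) (hD i))⟩, ?_⟩
    have h2 := hx.add hy
    rw [add_zero] at h2
    exact h2
  smul_mem' := by
    rintro c x ⟨⟨C, hC⟩, hx⟩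
    refine ⟨⟨‖c‖ * C, fun i => ?_⟩, ?_⟩
    · have h : ‖(c • x) i‖ = ‖c‖ * ‖x i‖ := by simp [norm_smul]
      rw [h]
      exact mul_le_mul_of_nonneg_left (hC i) (norm_nonneg c)
    · have h2 := hx.const_smul c
      rw [smul_zero] at h2
      exact h2

/-- The field `K{{t}}`, as a `K`-vector space. -/
abbrev Mt := ↥(mixedCarrier K)

/-- Basic neighbourhoods of zero for the higher topology on `K{{t}}`:
`Σ V_i t^i` where each `V_i` is an open neighbourhood of `0` in `K`, some `𝔭^c` is
contained in every `V_i`, and for every `l` eventually `𝔭^l ⊆ V_i`. -/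
def mixedBasic (q : ℕ) : Set (Set (Mt K)) :=
  {S | ∃ Vs : ℤ → Set K, (∀ i, IsOpen (Vs i) ∧ (0 : K) ∈ Vs i) ∧
    (∃ c : ℤ, ∀ i, {x : K | ‖x‖ ≤ (q : ℝ) ^ (-c)} ⊆ Vs i) ∧
    (∀ l : ℤ, ∃ i0 : ℤ, ∀ i, i0 ≤ i → {x : K | ‖x‖ ≤ (q : ℝ) ^ (-l)} ⊆ Vs i) ∧
    S = {f : Mt K | ∀ i, f.1 i ∈ Vs i}}

/-- The higher topology on `K{{t}}`. -/
def mixedTop (q : ℕ) : TopologicalSpace (Mt K) := addTopologyOf (mixedBasic K q)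

/-- `Λ = Σ_{i∈ℤ} 𝔭^{n_i} t^i ⊆ K{{t}}` for a sequence `(n_i) ⊆ ℤ ∪ {-∞}`. -/
def mixedLambda (q : ℕ) (n : ℤ → WithBot ℤ) : Set (Mt K) :=
  {f | ∀ i, f.1 i ∈ pB K q (n i)}

/-- `B = Σ_{i∈ℤ} 𝔭^{k_i} t^i ⊆ K{{t}}` for a sequence `(k_i) ⊆ ℤ ∪ {∞}`. -/
def mixedPT (q : ℕ) (k : ℤ → WithTop ℤ) : Set (Mt K) :=
  {f | ∀ i, f.1 i ∈ pT K q (k i)}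

/-- `A = Σ_{i∈ℤ} 𝔭^{k_i} t^i ⊆ K{{t}}` for a sequence `(k_i) ⊆ ℤ ∪ {±∞}`. -/
def mixedPE (q : ℕ) (k : ℤ → WithBot (WithTop ℤ)) : Set (Mt K) :=
  {f | ∀ i, f.1 i ∈ pE K q (k i)}

/-- The admissible seminorm `‖Σ x_i t^i‖ = sup_i ‖x_i‖ q^{n_i}` on `K{{t}}`. -/
def mixedSeminorm (q : ℕ) (n : ℤ → WithBot ℤ) (f : Mt K) : ℝ :=
  sSup {r : ℝ | ∃ i : ℤ, r = ‖f.1 i‖ * qpow q (n i)}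

/-- The ring of integers `𝒪{{t}} ⊆ K{{t}}`. -/
def mixedIntegers : Set (Mt K) := {f | ∀ i, ‖f.1 i‖ ≤ 1}

/-- The rank-two ring of integers `Σ_{i<0} 𝔭 t^i + Σ_{i≥0} 𝒪 t^i ⊆ K{{t}}`. -/
def mixedRankTwo (q : ℕ) : Set (Mt K) :=
  {f | (∀ i : ℤ, i < 0 → ‖f.1 i‖ ≤ ((q : ℝ))⁻¹) ∧ ∀ i : ℤ, 0 ≤ i → ‖f.1 i‖ ≤ 1}

/-- The monomial `t^i ∈ K{{t}}`. -/
def mixedT (i : ℤ) : Mt K :=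
  ⟨fun j => if j = i then 1 else 0,
    ⟨⟨1, fun j => by by_cases h : j = i <;> simp [h]⟩, by
      refine (tendsto_const_nhds : Filter.Tendsto (fun _ : ℤ => (0 : K))
        Filter.atBot (nhds 0)).congr' ?_
      filter_upwards [Filter.eventually_le_atBot (i - 1)] with j hj
      have h : j ≠ i := by omega
      simp [h]⟩⟩

/-- Coefficients of the product of two elements of `K{{t}}` (Cauchy product). -/
def mixedMulCoeff (x y : Mt K) : ℤ → K := fun k => ∑' i : ℤ, x.1 i * y.1 (k - i)

/-- Multiplication on `K{{t}}`. -/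
def mixedMul (x y : Mt K) : Mt K :=
  if h : mixedMulCoeff K x y ∈ mixedCarrier K then ⟨_, h⟩ else 0

/-- The pairing `γ(x)(y) = π₀(xy) = Σ_i x_i y_{-i}` on `K{{t}}`. -/
def mixedPairing (x y : Mt K) : K := ∑' i : ℤ, x.1 i * y.1 (-i)

/-!
Both rings are coefficientwise balls `{f | ‖f_i‖ ≤ ρ_i}` with `ρ` bounded, and every open
lattice contains one of the form `Λ_e = Σ 𝔭^{e_i} t^i` with `e` bounded above and `e_i → -∞` as
`i → ∞`. Boundedness follows by scaling, and completeness from coefficientwise limits, since a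
Cauchy net is uniformly Cauchy in every coefficient and a limit `a` inherits `a_i → 0` as
`i → -∞`.

Both rings contain `Σ_{i<0} 𝔭 t^i`. For `Λ = Σ 𝔭^{min(2,-i)} t^i` (which is `𝔭²` at all
`i ≤ -2`) and any `v_1, …, v_m`, the coefficients of the `v_s` at the `m + 1` places
`-2, …, -m-2` span a proper subspace of `K^{m+1}`; a functional killing it shows, by the
ultrametric inequality, that some `π t^{-r-2}` is not in `Λ + Σ 𝒪 v_s`. So neither ring is
compactoid. Nor is it c-compact: the partial sums `π (t^{-2} + ⋯ + t^{-N-1})` form a compatible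
family for lattices `L_N` that are `𝔭²` at `-N-1, …, -2` but only `𝔭` further down, and any
solution would have every coefficient at `i ≤ -2` of norm `q⁻¹`, contradicting `a_i → 0`.
-/

theorem exists_norm_le_norm_single_sub {𝕜 : Type*} [NormedField 𝕜] [IsUltrametricDist 𝕜]
    {m : ℕ} (u : Fin m → Fin (m + 1) → 𝕜) :
    ∃ r₀, ∀ (y : 𝕜), ∀ z ∈ Submodule.span 𝕜 (range u), ‖y‖ ≤ ‖Pi.single r₀ y - z‖ := by
  classical
  have hspan : Submodule.span 𝕜 (range u) < ⊤ := by
    refine Submodule.lt_top_of_finrank_lt_finrank ?_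
    calc Module.finrank 𝕜 (Submodule.span 𝕜 (range u)) ≤ m :=
          (finrank_range_le_card u).trans_eq (Fintype.card_fin m)
      _ < Module.finrank 𝕜 (Fin (m + 1) → 𝕜) := by simp
  obtain ⟨f, hf0, hker⟩ := Submodule.exists_le_ker_of_lt_top _ hspan
  set g : Fin (m + 1) → 𝕜 := fun r => f (Pi.single r 1)
  have hf : ∀ x, f x = ∑ r, x r * g r := fun x => by
    rw [LinearMap.pi_apply_eq_sum_univ f x]
    refine Finset.sum_congr rfl fun r _ => ?_
    rw [smul_eq_mul]
    congr 2 with j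
    rw [Pi.single_apply]
    simp only [@eq_comm _ j r]
  obtain ⟨r₀, -, hr₀⟩ := Finset.exists_max_image Finset.univ (‖g ·‖) Finset.univ_nonempty
  have hg : g r₀ ≠ 0 := fun h => hf0 <| LinearMap.ext fun x => by
    rw [hf, LinearMap.zero_apply]
    refine Finset.sum_eq_zero fun r _ => ?_
    rw [norm_le_zero_iff.1 ((hr₀ r (Finset.mem_univ r)).trans_eq (by rw [h, norm_zero])),
      mul_zero]
  refine ⟨r₀, fun y z hz => le_of_mul_le_mul_right ?_ (norm_pos_iff.2 hg)⟩
  have hfy : f (Pi.single r₀ y - z) = y * g r₀ := by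
    rw [map_sub, hker hz, sub_zero, hf, Finset.sum_eq_single r₀ (fun r _ hr => by
      rw [Pi.single_eq_of_ne hr, zero_mul]) (by simp), Pi.single_eq_same]
  rw [← norm_mul, ← hfy, hf]
  refine IsUltrametricDist.norm_sum_le_of_forall_le_of_nonneg (by positivity) fun r _ => ?_
  rw [norm_mul]
  exact mul_le_mul (norm_le_pi_norm _ r) (hr₀ r (Finset.mem_univ r)) (norm_nonneg _)
    (norm_nonneg _)

theorem nhds_addTopologyOf {W : Type} {ι : Type*} [AddCommGroup W] {B : Set (Set W)}
    {p : ι → Prop} {s : ι → Set W} (hB : (⨅ U ∈ B, 𝓟 U).HasBasis p s)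
    (h0 : ∀ i, p i → (0 : W) ∈ s i) (hadd : ∀ i, p i → ∀ u ∈ s i, ∀ v ∈ s i, u + v ∈ s i)
    (x : W) : @nhds W (addTopologyOf B) x = map (x + ·) (⨅ U ∈ B, 𝓟 U) := by
  refine TopologicalSpace.nhds_mkOfNhds_of_hasBasis (fun a => hB.map (a + ·))
    (fun a i hi => ⟨0, h0 i hi, add_zero a⟩) (fun a i hi => ?_) x
  filter_upwards [image_mem_map (hB.mem_of_mem hi)]
  rintro _ ⟨u, hu, rfl⟩
  refine mem_map.2 (mem_of_superset (hB.mem_of_mem hi) fun v hv => ?_)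
  exact ⟨u + v, hadd i hi u hu v hv, (add_assoc a u v).symm⟩

section HigherTopology

variable {K} {q : ℕ}

theorem zpow_neg_anti (hq : 1 < q) : Antitone fun m : ℤ => (q : ℝ) ^ (-m) := fun _ _ h =>
  zpow_le_zpow_right₀ (Nat.one_le_cast.2 hq.le) (neg_le_neg h)

theorem zpow_neg_two_lt_inv (hq : 1 < q) : (q : ℝ) ^ (-2 : ℤ) < (q : ℝ)⁻¹ := by
  rw [← zpow_neg_one]
  exact zpow_lt_zpow_right₀ (Nat.one_lt_cast.2 hq) (by norm_num)

theorem exists_zpow_neg_lt (hq : 1 < q) {ε : ℝ} (hε : 0 < ε) : ∃ m : ℤ, (q : ℝ) ^ (-m) < ε := by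
  obtain ⟨n, hn⟩ := exists_pow_lt_of_lt_one hε (inv_lt_one_of_one_lt₀ (Nat.one_lt_cast.2 hq))
  exact ⟨n, by rwa [zpow_neg, zpow_natCast, ← inv_pow]⟩

@[simp]
theorem mem_pB_coe {m : ℤ} {x : K} : x ∈ pB K q m ↔ ‖x‖ ≤ (q : ℝ) ^ (-m) :=
  Iff.rfl

theorem isOpen_pB_coe [IsUltrametricDist K] (hq : 1 < q) (m : ℤ) : IsOpen (pB K q m) := by
  convert IsUltrametricDist.isOpen_closedBall (0 : K) (by positivity : (q : ℝ) ^ (-m) ≠ 0)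
  ext x
  rw [mem_pB_coe, mem_closedBall_zero_iff]

/-- The exponents `e` for which `Λ_e = Σ 𝔭^{e_i} t^i` is an open lattice of `K{{t}}`. -/
def IsAdmissibleExponent (e : ℤ → ℤ) : Prop :=
  BddAbove (range e) ∧ Tendsto e atTop atBot

theorem IsAdmissibleExponent.mono {e e' : ℤ → ℤ} (he : IsAdmissibleExponent e) (h : e' ≤ e) :
    IsAdmissibleExponent e' := by
  obtain ⟨⟨C, hC⟩, he⟩ := he
  exact ⟨⟨C, forall_mem_range.2 fun i => (h i).trans (hC ⟨i, rfl⟩)⟩, tendsto_atBot_mono h he⟩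

theorem IsAdmissibleExponent.sup {e e' : ℤ → ℤ} (he : IsAdmissibleExponent e)
    (he' : IsAdmissibleExponent e') : IsAdmissibleExponent (e ⊔ e') := by
  obtain ⟨⟨C, hC⟩, he⟩ := he
  obtain ⟨⟨C', hC'⟩, he'⟩ := he'
  exact ⟨⟨C ⊔ C', forall_mem_range.2 fun i => sup_le_sup (hC ⟨i, rfl⟩) (hC' ⟨i, rfl⟩)⟩,
    tendsto_sup_atBot _ he he'⟩

theorem isAdmissibleExponent_min_sub (m N : ℤ) : IsAdmissibleExponent fun i => min m (N - i) :=
  ⟨⟨m, forall_mem_range.2 fun _ => min_le_left _ _⟩, tendsto_atBot_mono (fun _ => min_le_right _ _)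
    (tendsto_atBot_add_const_left _ N tendsto_neg_atTop_atBot)⟩

theorem mem_mixedLambda_coe {e : ℤ → ℤ} {f : Mt K} :
    f ∈ mixedLambda K q (e ·) ↔ ∀ i, ‖f.1 i‖ ≤ (q : ℝ) ^ (-e i) :=
  Iff.rfl

theorem mixedLambda_anti (hq : 1 < q) {e e' : ℤ → ℤ} (h : e ≤ e') :
    mixedLambda K q (e' ·) ⊆ mixedLambda K q (e ·) := fun _ hf =>
  mem_mixedLambda_coe.2 fun i => (mem_mixedLambda_coe.1 hf i).trans (zpow_neg_anti hq (h i))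

theorem norm_coeff_smul_mixedT (a : K) (i j : ℤ) :
    ‖(a • mixedT K i).1 j‖ = if j = i then ‖a‖ else 0 := by
  by_cases hj : j = i <;> simp [mixedT, hj]

theorem le_of_mixedLambda_subset (hq : 1 < q) {π : K} (hπ : ‖π‖ = (q : ℝ)⁻¹) {e e' : ℤ → ℤ}
    (h : mixedLambda K q (e ·) ⊆ mixedLambda K q (e' ·)) : e' ≤ e := by
  intro i
  have hnorm : ‖π ^ e i‖ = (q : ℝ) ^ (-e i) := by rw [norm_zpow, hπ, inv_zpow, zpow_neg]
  have hmem : π ^ e i • mixedT K i ∈ mixedLambda K q (e ·) := fun j => by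
    rw [mem_pB_coe, norm_coeff_smul_mixedT]
    split_ifs with hj
    · rw [hj, hnorm]
    · positivity
  have := h hmem i
  rw [mem_pB_coe, norm_coeff_smul_mixedT, if_pos rfl, hnorm] at this
  exact neg_le_neg_iff.1 ((zpow_le_zpow_iff_right₀ (Nat.one_lt_cast.2 hq)).1 this)

theorem zero_mem_mixedLambda (e : ℤ → ℤ) : (0 : Mt K) ∈ mixedLambda K q (e ·) := fun _ => by
  rw [mem_pB_coe, ZeroMemClass.coe_zero, Pi.zero_apply, norm_zero]
  positivity

theorem add_mem_mixedLambda [IsUltrametricDist K] {e : ℤ → ℤ} {f g : Mt K}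
    (hf : f ∈ mixedLambda K q (e ·)) (hg : g ∈ mixedLambda K q (e ·)) :
    f + g ∈ mixedLambda K q (e ·) := fun i =>
  (IsUltrametricDist.norm_add_le_max _ _).trans (max_le (hf i) (hg i))

theorem smul_mem_mixedLambda {e : ℤ → ℤ} {a : K} (ha : ‖a‖ ≤ 1) {f : Mt K}
    (hf : f ∈ mixedLambda K q (e ·)) : a • f ∈ mixedLambda K q (e ·) := fun i => by
  rw [mem_pB_coe, Submodule.coe_smul, Pi.smul_apply, norm_smul]
  exact (mul_le_of_le_one_left (norm_nonneg _) ha).trans (hf i)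

theorem exists_smul_mem_mixedLambda (hq : 1 < q) {e : ℤ → ℤ} (he : BddAbove (range e)) (C : ℝ) :
    ∃ a : K, a ≠ 0 ∧ ∀ f : Mt K, (∀ i, ‖f.1 i‖ ≤ C) → a • f ∈ mixedLambda K q (e ·) := by
  obtain ⟨c, hc⟩ := he
  have hC : 0 < |C| + 1 := by positivity
  obtain ⟨a, ha0, ha⟩ :=
    NormedField.exists_norm_lt K (div_pos (zpow_pos (by positivity : (0 : ℝ) < q) (-c)) hC)
  refine ⟨a, norm_pos_iff.1 ha0, fun f hf i => ?_⟩
  rw [mem_pB_coe, Submodule.coe_smul, Pi.smul_apply, norm_smul]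
  calc ‖a‖ * ‖f.1 i‖ ≤ (q : ℝ) ^ (-c) / (|C| + 1) * (|C| + 1) :=
        mul_le_mul ha.le ((hf i).trans ((le_abs_self C).trans (lt_add_one _).le)) (norm_nonneg _)
          (by positivity)
    _ = (q : ℝ) ^ (-c) := div_mul_cancel₀ _ hC.ne'
    _ ≤ (q : ℝ) ^ (-e i) := zpow_neg_anti hq (hc ⟨i, rfl⟩)

theorem isLatticeSet_mixedLambda [IsUltrametricDist K] (hq : 1 < q) {e : ℤ → ℤ}
    (he : BddAbove (range e)) : IsLatticeSet K (mixedLambda K q (e ·)) := by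
  refine ⟨⟨zero_mem_mixedLambda e, fun f hf g hg => add_mem_mixedLambda hf hg,
    fun a ha f hf => smul_mem_mixedLambda ha hf⟩, fun f => ?_⟩
  obtain ⟨C, hC⟩ := f.2.1
  obtain ⟨a, ha0, ha⟩ := exists_smul_mem_mixedLambda (K := K) hq he C
  exact ⟨a, ha0, ha f hC⟩

theorem mixedLambda_mem_mixedBasic [IsUltrametricDist K] (hq : 1 < q) {e : ℤ → ℤ}
    (he : IsAdmissibleExponent e) : mixedLambda K q (e ·) ∈ mixedBasic K q := by
  obtain ⟨⟨c, hc⟩, he⟩ := he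
  refine ⟨(pB K q <| e ·), fun i => ⟨isOpen_pB_coe hq _, ?_⟩, ⟨c, fun i => ?_⟩, fun l => ?_, rfl⟩
  · simpa using zpow_nonneg (Nat.cast_nonneg q) _
  · exact fun x hx => hx.trans (zpow_neg_anti hq (hc ⟨i, rfl⟩))
  · obtain ⟨i₀, hi₀⟩ := tendsto_atTop_atBot.1 he l
    exact ⟨i₀, fun i hi x hx => hx.trans (zpow_neg_anti hq (hi₀ i hi))⟩

theorem exists_mixedLambda_subset (hq : 1 < q) {U : Set (Mt K)} (hU : U ∈ mixedBasic K q) :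
    ∃ e, IsAdmissibleExponent e ∧ mixedLambda K q (e ·) ⊆ U := by
  obtain ⟨V, -, ⟨c, hc⟩, hev, rfl⟩ := hU
  -- `sInf (S i)` gives the largest ball `𝔭^l ⊆ V i` of radius at most `q^i`, so that it shrinks
  set S : ℤ → Set ℤ := fun i => {l | -i ≤ l ∧ pB K q l ⊆ V i}
  have hS : ∀ i, sInf (S i) ∈ S i := fun i => Int.csInf_mem
    ⟨max (-i) c, le_max_left _ _, fun x hx => hc i (hx.trans (zpow_neg_anti hq (le_max_right _ _)))⟩
    ⟨-i, fun _ hl => hl.1⟩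
  refine ⟨fun i => min c (sInf (S i)),
    ⟨⟨c, forall_mem_range.2 fun _ => min_le_left _ _⟩, tendsto_atTop_atBot.2 fun l => ?_⟩,
    fun f hf i => ?_⟩
  · obtain ⟨i₀, hi₀⟩ := hev l
    refine ⟨max i₀ (-l), fun i hi => (min_le_right _ _).trans (csInf_le ⟨-i, fun _ hl => hl.1⟩ ?_)⟩
    exact ⟨by omega, hi₀ i (le_of_max_le_left hi)⟩
  · rcases min_choice c (sInf (S i)) with h | h
    · exact hc i (by simpa [h] using hf i)
    · exact (hS i).2 (by simpa [h] using hf i)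

theorem hasBasis_iInf_mixedBasic [IsUltrametricDist K] (hq : 1 < q) :
    (⨅ U ∈ mixedBasic K q, 𝓟 U).HasBasis IsAdmissibleExponent fun e => mixedLambda K q (e ·) := by
  have hdir : DirectedOn (𝓟 ⁻¹'o (· ≥ ·)) (mixedBasic K q) := by
    intro U hU V hV
    obtain ⟨e, he, heU⟩ := exists_mixedLambda_subset hq hU
    obtain ⟨e', he', heV⟩ := exists_mixedLambda_subset hq hV
    refine ⟨mixedLambda K q ((e ⊔ e') ·), mixedLambda_mem_mixedBasic hq (he.sup he'), ?_, ?_⟩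
    · exact principal_mono.2 ((mixedLambda_anti hq le_sup_left).trans heU)
    · exact principal_mono.2 ((mixedLambda_anti hq le_sup_right).trans heV)
  refine ⟨fun t => ?_⟩
  rw [mem_biInf_of_directed hdir
    ⟨_, mixedLambda_mem_mixedBasic hq (isAdmissibleExponent_min_sub 0 0)⟩]
  simp only [mem_principal]
  constructor
  · rintro ⟨U, hU, hUt⟩
    obtain ⟨e, he, heU⟩ := exists_mixedLambda_subset hq hU
    exact ⟨e, he, heU.trans hUt⟩
  · rintro ⟨e, he, het⟩
    exact ⟨_, mixedLambda_mem_mixedBasic hq he, het⟩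

theorem hasBasis_nhds_mixedTop [IsUltrametricDist K] (hq : 1 < q) (x : Mt K) :
    (@nhds _ (mixedTop K q) x).HasBasis IsAdmissibleExponent
      fun e => (x + ·) '' mixedLambda K q (e ·) := by
  rw [mixedTop, nhds_addTopologyOf (hasBasis_iInf_mixedBasic hq)
    (fun e _ => zero_mem_mixedLambda e) (fun _ _ _ hu _ hv => add_mem_mixedLambda hu hv)]
  exact (hasBasis_iInf_mixedBasic hq).map _

theorem isOpen_mixedLambda [IsUltrametricDist K] (hq : 1 < q) {e : ℤ → ℤ}
    (he : IsAdmissibleExponent e) : IsOpen[mixedTop K q] (mixedLambda K q (e ·)) := by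
  let := mixedTop K q
  refine isOpen_iff_mem_nhds.2 fun x hx => (hasBasis_nhds_mixedTop hq x).mem_iff.2 ⟨e, he, ?_⟩
  rintro _ ⟨u, hu, rfl⟩
  exact add_mem_mixedLambda hx hu

end HigherTopology

section CoeffBall

variable {K} {q : ℕ}

def mixedCoeffBall (ρ : ℤ → ℝ) : Set (Mt K) := {f | ∀ i, ‖f.1 i‖ ≤ ρ i}

theorem mixedCoeffBall_mono {ρ ρ' : ℤ → ℝ} (h : ρ ≤ ρ') :
    mixedCoeffBall (K := K) ρ ⊆ mixedCoeffBall ρ' := fun _ hf i => (hf i).trans (h i)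

theorem mixedIntegers_eq_mixedCoeffBall : mixedIntegers K = mixedCoeffBall 1 := rfl

theorem mixedRankTwo_eq_mixedCoeffBall :
    mixedRankTwo K q = mixedCoeffBall fun i => if i < 0 then (q : ℝ)⁻¹ else 1 := by
  ext f
  refine ⟨fun ⟨hneg, hnonneg⟩ i => ?_, fun h => ⟨fun i hi => ?_, fun i hi => ?_⟩⟩
  · dsimp only
    split_ifs with hi
    exacts [hneg i hi, hnonneg i (not_lt.1 hi)]
  · simpa [hi] using h i
  · simpa [not_lt.2 hi] using h i

theorem isVNBounded_mixedCoeffBall [IsUltrametricDist K] (hq : 1 < q) {ρ : ℤ → ℝ}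
    (hρ : BddAbove (range ρ)) : IsVNBounded K (mixedTop K q) (mixedCoeffBall ρ) := by
  intro Λ hΛ hΛopen
  let := mixedTop K q
  obtain ⟨e, he, heΛ⟩ := (hasBasis_nhds_mixedTop hq 0).mem_iff.1 (hΛopen.mem_nhds hΛ.1.1)
  obtain ⟨C, hC⟩ := hρ
  obtain ⟨a, ha0, ha⟩ := exists_smul_mem_mixedLambda (K := K) hq he.1 C
  refine ⟨a⁻¹, fun f hf => ⟨a • f, heΛ ⟨a • f, ha f fun i => ?_, zero_add _⟩, inv_smul_smul₀ ha0 f⟩⟩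
  exact (hf i).trans (hC ⟨i, rfl⟩)

theorem exists_tendsto_coeff_of_cauchy [CompleteSpace K] (hq : 1 < q) {ι : Type*} [Preorder ι]
    [Nonempty ι] [IsDirectedOrder ι] {x : ι → Mt K}
    (hx : ∀ e, IsAdmissibleExponent e → ∃ i₀, ∀ j ≥ i₀, ∀ k ≥ i₀, ∀ n,
      ‖(x j).1 n - (x k).1 n‖ ≤ (q : ℝ) ^ (-e n)) :
    ∃ a : ℤ → K, (∀ n, Tendsto (fun j => (x j).1 n) atTop (𝓝 (a n))) ∧
      ∀ e, IsAdmissibleExponent e → ∃ i₀, ∀ j ≥ i₀, ∀ n, ‖(x j).1 n - a n‖ ≤ (q : ℝ) ^ (-e n) := by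
  have hcoeff : ∀ n, ∃ b, Tendsto (fun j => (x j).1 n) atTop (𝓝 b) := fun n => by
    refine CompleteSpace.complete (Metric.cauchy_iff.2 ⟨map_neBot, fun ε hε => ?_⟩)
    obtain ⟨m, hm⟩ := exists_zpow_neg_lt hq hε
    obtain ⟨i₀, hi₀⟩ := hx _ (isAdmissibleExponent_min_sub m (n + m))
    refine ⟨_, image_mem_map (Ici_mem_atTop i₀), ?_⟩
    rintro _ ⟨j, hj, rfl⟩ _ ⟨k, hk, rfl⟩
    rw [dist_eq_norm]
    refine (hi₀ j hj k hk n).trans_lt ?_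
    simpa using hm
  choose a ha using hcoeff
  refine ⟨a, ha, fun e he => ?_⟩
  obtain ⟨i₀, hi₀⟩ := hx e he
  exact ⟨i₀, fun j hj n => le_of_tendsto ((tendsto_const_nhds.sub (ha n)).norm)
    (eventually_atTop.2 ⟨i₀, fun k hk => hi₀ j hj k hk n⟩)⟩

theorem isNetComplete_mixedCoeffBall [CompleteSpace K] [IsUltrametricDist K] (hq : 1 < q)
    {ρ : ℤ → ℝ} (hρ : BddAbove (range ρ)) : IsNetComplete (mixedTop K q) (mixedCoeffBall ρ) := by
  intro ι _ _ hdir x hxA hx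
  have : IsDirectedOrder ι := ⟨hdir⟩
  let := mixedTop K q
  obtain ⟨a, ha, hlim⟩ := exists_tendsto_coeff_of_cauchy hq fun e he =>
    hx _ ((isOpen_mixedLambda hq he).mem_nhds (zero_mem_mixedLambda e))
  have hball : ∀ n, ‖a n‖ ≤ ρ n := fun n =>
    le_of_tendsto (ha n).norm (Eventually.of_forall fun j => hxA j n)
  have hzero : Tendsto a atBot (𝓝 0) := by
    refine Metric.tendsto_nhds.2 fun ε hε => ?_
    obtain ⟨m, hm⟩ := exists_zpow_neg_lt hq hε
    obtain ⟨i₀, hi₀⟩ := hlim _ (isAdmissibleExponent_min_sub m 0)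
    filter_upwards [Metric.tendsto_nhds.1 (x i₀).2.2 ε hε, eventually_le_atBot (-m)] with n hn hnm
    rw [dist_zero_right] at hn ⊢
    have hmn : min m (0 - n) = m := min_eq_left (by omega)
    calc ‖a n‖ = ‖(x i₀).1 n + (a n - (x i₀).1 n)‖ := by rw [add_sub_cancel]
      _ ≤ max ‖(x i₀).1 n‖ ‖a n - (x i₀).1 n‖ := IsUltrametricDist.norm_add_le_max _ _
      _ < ε := max_lt hn (by rw [norm_sub_rev]; exact (hi₀ i₀ le_rfl n).trans_lt (by rwa [hmn]))
  obtain ⟨C, hC⟩ := hρ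
  let a' : Mt K := ⟨a, ⟨C, fun n => (hball n).trans (hC ⟨n, rfl⟩)⟩, hzero⟩
  refine ⟨a', hball, (hasBasis_nhds_mixedTop hq a').tendsto_right_iff.2 fun e he => ?_⟩
  obtain ⟨i₀, hi₀⟩ := hlim e he
  filter_upwards [eventually_ge_atTop i₀] with j hj
  exact ⟨x j - a', hi₀ j hj, add_sub_cancel a' (x j)⟩

theorem not_isCompactoid_mixedCoeffBall [IsUltrametricDist K] (hq : 1 < q) {π : K}
    (hπ : ‖π‖ = (q : ℝ)⁻¹) {ρ : ℤ → ℝ} (hρ : (fun i => if i < 0 then (q : ℝ)⁻¹ else 0) ≤ ρ) :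
    ¬ IsCompactoid K (mixedTop K q) (mixedCoeffBall ρ) := by
  intro h
  have he := isAdmissibleExponent_min_sub 2 0
  obtain ⟨m, v, hv⟩ := h _ (isLatticeSet_mixedLambda hq he.1) (isOpen_mixedLambda hq he)
  set j : Fin (m + 1) → ℤ := fun r => -(r : ℤ) - 2
  have hj : Function.Injective j := fun r r' h => Fin.ext (by simpa [j] using h)
  have hj_le : ∀ r, j r ≤ -2 := fun r => by simp only [j]; omega
  let R : Mt K →ₗ[K] Fin (m + 1) → K :=
    LinearMap.pi fun r => (LinearMap.proj (j r)).comp (mixedCarrier K).subtype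
  obtain ⟨r₀, hr₀⟩ := exists_norm_le_norm_single_sub fun s => R (v s)
  have hmem : π • mixedT K (j r₀) ∈ mixedCoeffBall ρ := fun i => by
    refine le_trans ?_ (hρ i)
    rw [norm_coeff_smul_mixedT]
    dsimp only
    split_ifs with hi hneg hneg
    · exact hπ.le
    · exact absurd (hi ▸ (hj_le r₀).trans_lt (by norm_num)) hneg
    · positivity
    · exact le_rfl
  obtain ⟨l, hl, c, -, hfl⟩ := hv hmem
  have hRf : R (π • mixedT K (j r₀)) = Pi.single r₀ π := by
    ext r
    simp [R, mixedT, Pi.single_apply, hj.eq_iff]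
  have hRl : R l = Pi.single r₀ π - ∑ s, c s • R (v s) := by
    rw [← hRf, hfl, map_add, map_sum]
    simp only [map_smul, add_sub_cancel_right]
  have hnorm : ‖R l‖ ≤ (q : ℝ) ^ (-2 : ℤ) :=
    (pi_norm_le_iff_of_nonneg (by positivity)).2 fun r => by
      have := mem_mixedLambda_coe.1 hl (j r)
      rwa [min_eq_left (by linarith [hj_le r])] at this
  have := hr₀ π (∑ s, c s • R (v s)) (Submodule.sum_mem _ fun s _ =>
    Submodule.smul_mem _ _ (Submodule.subset_span ⟨s, rfl⟩))
  rw [← hRl, hπ] at this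
  exact (this.trans hnorm).not_gt (zpow_neg_two_lt_inv hq)

theorem mem_mixedCarrier_of_finite_support {f : ℤ → K} (hf : (Function.support f).Finite) :
    f ∈ mixedCarrier K := by
  refine ⟨⟨∑ i ∈ hf.toFinset, ‖f i‖, fun i => ?_⟩, ?_⟩
  · by_cases hi : i ∈ Function.support f
    · exact Finset.single_le_sum (fun _ _ => norm_nonneg _) (hf.mem_toFinset.2 hi)
    · rw [Function.notMem_support.1 hi, norm_zero]
      positivity
  · obtain ⟨b, hb⟩ := hf.bddBelow
    refine tendsto_const_nhds.congr' ?_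
    filter_upwards [eventually_lt_atBot b] with i hi
    exact (Function.notMem_support.1 fun h => (hb h).not_gt hi).symm

/-- `L_N = Σ 𝔭^{blockExponent N i} t^i` is `𝔭²` at `-N-1, …, -2` and contains `𝔭` further down. -/
def blockExponent (N : ℕ) (i : ℤ) : ℤ := min (min 2 (0 - i)) (i + N + 3)

/-- `π (t^{-N-1} + ⋯ + t^{-2})`. -/
def blockElement (π : K) (N : ℕ) : Mt K :=
  ⟨(Icc (-(N : ℤ) - 1) (-2)).indicator fun _ => π,
    mem_mixedCarrier_of_finite_support ((finite_Icc _ _).subset support_indicator_subset)⟩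

theorem blockElement_apply (π : K) (N : ℕ) (i : ℤ) :
    (blockElement π N).1 i = (Icc (-(N : ℤ) - 1) (-2)).indicator (fun _ => π) i :=
  rfl

theorem isAdmissibleExponent_blockExponent (N : ℕ) : IsAdmissibleExponent (blockExponent N) :=
  (isAdmissibleExponent_min_sub 2 0).mono fun _ => min_le_left _ _

theorem blockExponent_mono : Monotone blockExponent := fun N M h i => by
  simp only [blockExponent]
  omega

theorem blockElement_mem_mixedCoeffBall {π : K} (hπ : ‖π‖ = (q : ℝ)⁻¹) (N : ℕ) :
    blockElement π N ∈ mixedCoeffBall fun i => if i < 0 then (q : ℝ)⁻¹ else 0 := fun i => by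
  rw [blockElement_apply, norm_indicator_eq_indicator_norm, hπ]
  dsimp only
  by_cases hi : i ∈ Icc (-(N : ℤ) - 1) (-2)
  · rw [indicator_of_mem hi, if_pos (by rw [mem_Icc] at hi; omega)]
  · rw [indicator_of_notMem hi]
    positivity

theorem blockElement_sub_mem (hq : 1 < q) {π : K} (hπ : ‖π‖ = (q : ℝ)⁻¹) {N M : ℕ}
    (h : blockExponent N ≤ blockExponent M) :
    blockElement π M - blockElement π N ∈ mixedLambda K q (blockExponent N ·) := fun i => by
  have hinv : ∀ {k : ℤ}, k ≤ 1 → (q : ℝ)⁻¹ ≤ (q : ℝ) ^ (-k) := fun hk =>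
    zpow_neg_one (q : ℝ) ▸ zpow_neg_anti hq hk
  have hle := h i
  rw [mem_pB_coe, Submodule.coe_sub, Pi.sub_apply, blockElement_apply, blockElement_apply]
  by_cases hM : i ∈ Icc (-(M : ℤ) - 1) (-2) <;> by_cases hN : i ∈ Icc (-(N : ℤ) - 1) (-2)
  · rw [indicator_of_mem hM, indicator_of_mem hN, sub_self, norm_zero]
    positivity
  · rw [indicator_of_mem hM, indicator_of_notMem hN, sub_zero, hπ]
    simp only [blockExponent, mem_Icc] at hM hN ⊢
    exact hinv (by omega)
  · rw [indicator_of_notMem hM, indicator_of_mem hN, zero_sub, norm_neg, hπ]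
    simp only [blockExponent, mem_Icc] at hM hN hle ⊢
    exact hinv (by omega)
  · rw [indicator_of_notMem hM, indicator_of_notMem hN, sub_self, norm_zero]
    positivity

theorem not_isCCompact_mixedCoeffBall [IsUltrametricDist K] (hq : 1 < q) {π : K}
    (hπ : ‖π‖ = (q : ℝ)⁻¹) {ρ : ℤ → ℝ} (hρ : (fun i => if i < 0 then (q : ℝ)⁻¹ else 0) ≤ ρ) :
    ¬ IsCCompact K (mixedTop K q) (mixedCoeffBall ρ) := by
  intro h
  obtain ⟨a, -, ha⟩ := h ℕ (fun N => mixedLambda K q (blockExponent N ·))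
    (fun N => ⟨isLatticeSet_mixedLambda hq (isAdmissibleExponent_blockExponent N).1,
      isOpen_mixedLambda hq (isAdmissibleExponent_blockExponent N)⟩)
    (fun N M => ⟨max N M, mixedLambda_anti hq (blockExponent_mono (le_max_left N M)),
      mixedLambda_anti hq (blockExponent_mono (le_max_right N M))⟩)
    (blockElement π) (fun N => mixedCoeffBall_mono hρ (blockElement_mem_mixedCoeffBall hπ N))
    (fun N M hMN => blockElement_sub_mem hq hπ (le_of_mixedLambda_subset hq hπ hMN))
  have hnorm : ∀ i ≤ -2, ‖a.1 i‖ = ‖π‖ := fun i hi => by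
    have hai := ha (-i - 1).toNat i
    rw [mem_pB_coe, Submodule.coe_sub, Pi.sub_apply, blockElement_apply,
      indicator_of_mem (by rw [mem_Icc]; omega),
      show blockExponent (-i - 1).toNat i = 2 by simp only [blockExponent]; omega] at hai
    have hlt : ‖a.1 i - π‖ < ‖π‖ := hai.trans_lt (hπ ▸ zpow_neg_two_lt_inv hq)
    simpa [max_eq_right hlt.le] using IsUltrametricDist.norm_add_eq_max_of_norm_ne_norm hlt.ne
  obtain ⟨i, hi, hi'⟩ := ((Metric.tendsto_nhds.1 a.2.2 ‖π‖ (hπ ▸ by positivity)).and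
    (eventually_le_atBot (-2))).exists
  rw [dist_zero_right, hnorm i hi'] at hi
  exact lt_irrefl _ hi

end CoeffBall

/-- In `K{{t}}` with the higher topology, the ring of integers `𝒪{{t}}` and
the rank-two ring of integers `Σ_{i<0} 𝔭 t^i + Σ_{i≥0} 𝒪 t^i` are bounded and complete
`𝒪`-submodules which are neither compactoid nor c-compact. -/
theorem statement16 (q : ℕ) (hK : IsCharZeroLocalField K q) :
    (IsVNBounded K (mixedTop K q) (mixedIntegers K) ∧
      IsNetComplete (mixedTop K q) (mixedIntegers K) ∧
      ¬ IsCompactoid K (mixedTop K q) (mixedIntegers K) ∧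
      ¬ IsCCompact K (mixedTop K q) (mixedIntegers K)) ∧
    (IsVNBounded K (mixedTop K q) (mixedRankTwo K q) ∧
      IsNetComplete (mixedTop K q) (mixedRankTwo K q) ∧
      ¬ IsCompactoid K (mixedTop K q) (mixedRankTwo K q) ∧
      ¬ IsCCompact K (mixedTop K q) (mixedRankTwo K q)) := by
  obtain ⟨π, hπ⟩ := hK.exists_uniformizer
  have hq := hK.one_lt_q
  have := hK.complete
  have : IsUltrametricDist K := .isUltrametricDist_of_forall_norm_add_le_max_norm hK.nonarch
  have hinv : (q : ℝ)⁻¹ ≤ 1 := inv_le_one_of_one_le₀ (Nat.one_le_cast.2 hq.le)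
  have hball : ∀ ρ : ℤ → ℝ, ρ ≤ 1 → (fun i => if i < 0 then (q : ℝ)⁻¹ else 0) ≤ ρ →
      IsVNBounded K (mixedTop K q) (mixedCoeffBall ρ) ∧
      IsNetComplete (mixedTop K q) (mixedCoeffBall ρ) ∧
      ¬ IsCompactoid K (mixedTop K q) (mixedCoeffBall ρ) ∧
      ¬ IsCCompact K (mixedTop K q) (mixedCoeffBall ρ) := fun ρ hρ1 hρ =>
    ⟨isVNBounded_mixedCoeffBall hq ⟨1, forall_mem_range.2 hρ1⟩,
      isNetComplete_mixedCoeffBall hq ⟨1, forall_mem_range.2 hρ1⟩,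
      not_isCompactoid_mixedCoeffBall hq hπ hρ, not_isCCompact_mixedCoeffBall hq hπ hρ⟩
  rw [mixedIntegers_eq_mixedCoeffBall, mixedRankTwo_eq_mixedCoeffBall]
  refine ⟨hball 1 le_rfl fun i => ?_, hball _ (fun i => ?_) fun i => ?_⟩ <;> dsimp only <;>
    split_ifs <;> simp [hinv]

end TwoDimLF
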